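/- Let f : ℝ → ℝ be infinitely differentiable and x ∈ ℝ. Define E(h) = (f(x−2h)−2f(x−h)+f(x))² − 2(f(x−h)−2f(x)+f(x+h))² + (f(x)−2f(x+h)+f(x+2h))². Then as h → 0⁺, E(h) = 2(f″(x)f⁗(x) + (f‴(x))²)h⁶ + O(h⁸); consequently the global smoothness indicator ζ(h) = |E(h)| satisfies ζ(h) = 2|f″(x)f⁗(x) + (f‴(x))²|h⁶ + O(h⁸). -/

import Mathlib

open Filter Asymptotics Topology

theorem taylor_isBigO : ∀ (n : ℕ) (g : ℝ → ℝ), ContDiff ℝ ((⊤ : ℕ∞) : WithTop ℕ∞) g →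
    (fun h : ℝ => g h - ∑ k ∈ Finset.range n, iteratedDeriv k g 0 / (Nat.factorial k : ℝ) * h ^ k)
      =O[𝓝 (0:ℝ)] fun h => h ^ n := by
  intro n
  induction n with
  | zero =>
    intro g hg
    simp only [Finset.range_zero, Finset.sum_empty, sub_zero, pow_zero]
    exact (hg.continuous.tendsto 0).isBigO_one ℝ
  | succ n ih =>
    intro g hg
    have hg' : ContDiff ℝ ((⊤ : ℕ∞) : WithTop ℕ∞) (deriv g) := (contDiff_infty_iff_deriv.mp hg).2
    have hG0 : g 0 - ∑ k ∈ Finset.range (n+1), iteratedDeriv k g 0 / (Nat.factorial k : ℝ) * (0:ℝ) ^ k = 0 := by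
      rw [Finset.sum_range_succ']
      simp [iteratedDeriv_zero]
    have hder : ∀ t : ℝ, HasDerivAt
        (fun h : ℝ => g h - ∑ k ∈ Finset.range (n+1), iteratedDeriv k g 0 / (Nat.factorial k : ℝ) * h ^ k)
        (deriv g t - ∑ k ∈ Finset.range n, iteratedDeriv k (deriv g) 0 / (Nat.factorial k : ℝ) * t ^ k) t := by
      intro t
      have h1 : HasDerivAt g (deriv g t) t := (hg.differentiable (by simp) t).hasDerivAt
      have h2 : HasDerivAt (fun h : ℝ => ∑ k ∈ Finset.range (n+1), iteratedDeriv k g 0 / (Nat.factorial k : ℝ) * h ^ k)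
          (∑ k ∈ Finset.range (n+1), iteratedDeriv k g 0 / (Nat.factorial k : ℝ) * ((k : ℝ) * t ^ (k-1))) t :=
        HasDerivAt.fun_sum fun k _ => (hasDerivAt_pow k t).const_mul _
      have h3 : (∑ k ∈ Finset.range (n+1), iteratedDeriv k g 0 / (Nat.factorial k : ℝ) * ((k : ℝ) * t ^ (k-1)))
          = ∑ k ∈ Finset.range n, iteratedDeriv k (deriv g) 0 / (Nat.factorial k : ℝ) * t ^ k := by
        rw [Finset.sum_range_succ']
        simp only [Nat.cast_zero, zero_mul, mul_zero, add_zero, Nat.add_sub_cancel]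
        refine Finset.sum_congr rfl fun k _ => ?_
        rw [iteratedDeriv_succ', Nat.factorial_succ]
        have hk : ((Nat.factorial k : ℝ)) ≠ 0 := Nat.cast_ne_zero.mpr (Nat.factorial_ne_zero k)
        push_cast
        field_simp
      rw [← h3]
      exact h1.sub h2
    obtain ⟨c₀, hc₀⟩ := (ih (deriv g) hg').bound
    rw [Metric.eventually_nhds_iff] at hc₀
    obtain ⟨δ, hδ, hb⟩ := hc₀
    rw [isBigO_iff]
    refine ⟨|c₀|, ?_⟩
    rw [Metric.eventually_nhds_iff]
    refine ⟨δ, hδ, fun h hhδ => ?_⟩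
    have hhδ' : |h| < δ := by simpa [Real.dist_eq] using hhδ
    have key : ‖(g h - ∑ k ∈ Finset.range (n+1), iteratedDeriv k g 0 / (Nat.factorial k : ℝ) * h ^ k)
        - (g 0 - ∑ k ∈ Finset.range (n+1), iteratedDeriv k g 0 / (Nat.factorial k : ℝ) * (0:ℝ) ^ k)‖
        ≤ (|c₀| * |h| ^ n) * ‖h - 0‖ := by
      refine Convex.norm_image_sub_le_of_norm_hasDerivWithin_le
        (f' := fun t => deriv g t - ∑ k ∈ Finset.range n, iteratedDeriv k (deriv g) 0 / (Nat.factorial k : ℝ) * t ^ k)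
        (fun t _ => (hder t).hasDerivWithinAt) (fun t ht => ?_) (convex_uIcc 0 h)
        Set.left_mem_uIcc Set.right_mem_uIcc
      have hth : |t| ≤ |h| := by
        rcases Set.mem_uIcc.mp ht with ⟨h1, h2⟩ | ⟨h1, h2⟩
        · exact (abs_le_max_abs_abs h1 h2).trans (by simp)
        · exact (abs_le_max_abs_abs h1 h2).trans (by simp)
      have htd : dist t 0 < δ := by
        rw [Real.dist_eq, sub_zero]; exact lt_of_le_of_lt hth hhδ'
      calc ‖deriv g t - ∑ k ∈ Finset.range n, iteratedDeriv k (deriv g) 0 / (Nat.factorial k : ℝ) * t ^ k‖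
          ≤ c₀ * ‖t ^ n‖ := hb htd
        _ ≤ |c₀| * |t| ^ n := by
            rw [Real.norm_eq_abs, abs_pow]
            exact mul_le_mul_of_nonneg_right (le_abs_self c₀) (by positivity)
        _ ≤ |c₀| * |h| ^ n := by
            exact mul_le_mul_of_nonneg_left (pow_le_pow_left₀ (abs_nonneg t) hth n) (abs_nonneg c₀)
    rw [hG0, sub_zero, sub_zero] at key
    calc ‖g h - ∑ k ∈ Finset.range (n+1), iteratedDeriv k g 0 / (Nat.factorial k : ℝ) * h ^ k‖
        ≤ |c₀| * |h| ^ n * |h| := by simpa [Real.norm_eq_abs] using key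
      _ = |c₀| * ‖h ^ (n+1)‖ := by rw [Real.norm_eq_abs, abs_pow, pow_succ]; ring

lemma global_algebra (a0 a1 a2 a3 a4 a5 a6 a7 h R1 R2 R3 R4 : ℝ) :
    ((a0 + a1 * (-2*h) + a2/2 * (-2*h)^2 + a3/6 * (-2*h)^3 + a4/24 * (-2*h)^4 + a5/120 * (-2*h)^5 + a6/720 * (-2*h)^6 + a7/5040 * (-2*h)^7) + R1 - 2*((a0 + a1 * (-h) + a2/2 * (-h)^2 + a3/6 * (-h)^3 + a4/24 * (-h)^4 + a5/120 * (-h)^5 + a6/720 * (-h)^6 + a7/5040 * (-h)^7) + R2) + a0)^2 - 2*(((a0 + a1 * (-h) + a2/2 * (-h)^2 + a3/6 * (-h)^3 + a4/24 * (-h)^4 + a5/120 * (-h)^5 + a6/720 * (-h)^6 + a7/5040 * (-h)^7) + R2) - 2*a0 + ((a0 + a1 * h + a2/2 * h^2 + a3/6 * h^3 + a4/24 * h^4 + a5/120 * h^5 + a6/720 * h^6 + a7/5040 * h^7) + R3))^2 + (a0 - 2*((a0 + a1 * h + a2/2 * h^2 + a3/6 * h^3 + a4/24 * h^4 + a5/120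 * h^5 + a6/720 * h^6 + a7/5040 * h^7) + R3) + ((a0 + a1 * (2*h) + a2/2 * (2*h)^2 + a3/6 * (2*h)^3 + a4/24 * (2*h)^4 + a5/120 * (2*h)^5 + a6/720 * (2*h)^6 + a7/5040 * (2*h)^7) + R4))^2 - 2*(a2*a4 + a3^2)*h^6
    = (R1 - 2*R2) * (((a0 + a1 * (-2*h) + a2/2 * (-2*h)^2 + a3/6 * (-2*h)^3 + a4/24 * (-2*h)^4 + a5/120 * (-2*h)^5 + a6/720 * (-2*h)^6 + a7/5040 * (-2*h)^7) + R1 - 2*((a0 + a1 * (-h) + a2/2 * (-h)^2 + a3/6 * (-h)^3 + a4/24 * (-h)^4 + a5/120 * (-h)^5 + a6/720 * (-h)^6 + a7/5040 * (-h)^7) + R2) + a0) + ((a0 + a1 * (-2*h) + a2/2 * (-2*h)^2 + a3/6 * (-2*h)^3 + a4/24 * (-2*h)^4 + a5/120 * (-2*h)^5 + a6/720 * (-2*h)^6 + a7/5040 * (-2*h)^7) - 2*(a0 + a1 * (-h) + a2/2 * (-h)^2 + a3/6 * (-h)^3 + a4/24 * (-h)^4 + a5/120 * (-h)^5 + a6/720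 * (-h)^6 + a7/5040 * (-h)^7) + a0)) - 2*((R2 + R3) * ((((a0 + a1 * (-h) + a2/2 * (-h)^2 + a3/6 * (-h)^3 + a4/24 * (-h)^4 + a5/120 * (-h)^5 + a6/720 * (-h)^6 + a7/5040 * (-h)^7) + R2) - 2*a0 + ((a0 + a1 * h + a2/2 * h^2 + a3/6 * h^3 + a4/24 * h^4 + a5/120 * h^5 + a6/720 * h^6 + a7/5040 * h^7) + R3)) + ((a0 + a1 * (-h) + a2/2 * (-h)^2 + a3/6 * (-h)^3 + a4/24 * (-h)^4 + a5/120 * (-h)^5 + a6/720 * (-h)^6 + a7/5040 * (-h)^7) - 2*a0 + (a0 + a1 * h + a2/2 * h^2 + a3/6 * h^3 + a4/24 * h^4 + a5/120 * h^5 + a6/720 * h^6 + a7/5040 * h^7)))) + (-(2*R3) + R4) * ((a0 - 2*((a0 + a1 * h + a2/2 * h^2 + a3/6 * h^3 + a4/24 * h^4 + a5/120 * h^5 + a6/720 * h^6 + a7/5040 * h^7) + R3) + ((a0 + a1 * (2*h) + a2/2 * (2*h)^2 + a3/6 * (2*h)^3 + a4/24 * (2*h)^4 + a5/120 * (2*h)^5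 + a6/720 * (2*h)^6 + a7/5040 * (2*h)^7) + R4)) + (a0 - 2*(a0 + a1 * h + a2/2 * h^2 + a3/6 * h^3 + a4/24 * h^4 + a5/120 * h^5 + a6/720 * h^6 + a7/5040 * h^7) + (a0 + a1 * (2*h) + a2/2 * (2*h)^2 + a3/6 * (2*h)^3 + a4/24 * (2*h)^4 + a5/120 * (2*h)^5 + a6/720 * (2*h)^6 + a7/5040 * (2*h)^7))) + h^8 * ((((2:ℝ)/3)*a4^2 + a3*a5 + ((1:ℝ)/3)*a2*a6) + (((1:ℝ)/8)*a5^2 + ((1:ℝ)/5)*a4*a6 + ((1:ℝ)/10)*a3*a7)*h^2 + (((2:ℝ)/135)*a6^2 + ((1:ℝ)/40)*a5*a7)*h^4 + (((1:ℝ)/800)*a7^2)*h^6) := by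
  ring

/-- The (unsigned) combination of second differences whose absolute value is the
global smoothness indicator `ζ`. -/
noncomputable def globalE (f : ℝ → ℝ) (x h : ℝ) : ℝ :=
  (f (x - 2*h) - 2 * f (x - h) + f x)^2
    - 2 * (f (x - h) - 2 * f x + f (x + h))^2
    + (f x - 2 * f (x + h) + f (x + 2*h))^2

/-- Taylor expansion of the global smoothness indicator: `E(h)` is
`2(f″f⁗ + (f‴)²)h⁶ + O(h⁸)` as `h → 0⁺`, and consequently
`ζ(h) = |E(h)| = 2|f″f⁗ + (f‴)²|h⁶ + O(h⁸)`. -/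
theorem globalSmoothnessIndicator_sixth_order (f : ℝ → ℝ) (hf : ContDiff ℝ (⊤ : ℕ∞) f) (x : ℝ) :
    ((fun h : ℝ => globalE f x h -
        2 * (iteratedDeriv 2 f x * iteratedDeriv 4 f x + (iteratedDeriv 3 f x)^2) * h^6)
      =O[𝓝[>] (0:ℝ)] fun h => h ^ 8)
    ∧ ((fun h : ℝ => |globalE f x h| -
        2 * |iteratedDeriv 2 f x * iteratedDeriv 4 f x + (iteratedDeriv 3 f x)^2| * h^6)
      =O[𝓝[>] (0:ℝ)] fun h => h ^ 8) := by
  have hf' : ContDiff ℝ ((⊤ : ℕ∞) : WithTop ℕ∞) f := hf.of_le (by simp)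
  have hcont : Continuous f := hf'.continuous
  set r : ℝ → ℝ := fun t => f (x + t) - ((f x) + (iteratedDeriv 1 f x) * t + (iteratedDeriv 2 f x)/2 * t^2 + (iteratedDeriv 3 f x)/6 * t^3 + (iteratedDeriv 4 f x)/24 * t^4 + (iteratedDeriv 5 f x)/120 * t^5 + (iteratedDeriv 6 f x)/720 * t^6 + (iteratedDeriv 7 f x)/5040 * t^7) with hrdef
  have hrc : Continuous r := by rw [hrdef]; fun_prop
  have hg : ContDiff ℝ ((⊤ : ℕ∞) : WithTop ℕ∞) (fun t : ℝ => f (x + t)) :=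
    hf'.comp (contDiff_const.add contDiff_id)
  have hid : ∀ k : ℕ, iteratedDeriv k (fun t : ℝ => f (x + t)) 0 = iteratedDeriv k f x := by
    intro k
    have := congrFun (iteratedDeriv_comp_const_add k f x) 0
    simpa using this
  have hr : r =O[𝓝 (0:ℝ)] fun t => t ^ 8 := by
    have h0 := taylor_isBigO 8 (fun t : ℝ => f (x + t)) hg
    have heq : (fun t : ℝ => f (x + t) -
        ∑ k ∈ Finset.range 8, iteratedDeriv k (fun t : ℝ => f (x + t)) 0 / (Nat.factorial k : ℝ) * t ^ k)
        = r := by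
      funext t
      rw [hrdef]
      simp only [Finset.sum_range_succ, Finset.sum_range_zero, hid, iteratedDeriv_zero]
      norm_num [Nat.factorial]
    exact heq ▸ h0
  have hscale : ∀ c : ℝ, (fun h : ℝ => r (c * h)) =O[𝓝 (0:ℝ)] fun h => h ^ 8 := by
    intro c
    have h1 : Filter.Tendsto (fun h : ℝ => c * h) (𝓝 (0:ℝ)) (𝓝 (0:ℝ)) := by
      simpa using (continuous_mul_left c : Continuous fun h : ℝ => c * h).tendsto 0
    have h2 := hr.comp_tendsto h1
    have h3 : (fun h : ℝ => (c * h) ^ 8) =O[𝓝 (0:ℝ)] fun h => h ^ 8 := by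
      simp only [mul_pow]
      exact (isBigO_refl (fun h : ℝ => h ^ 8) (𝓝 0)).const_mul_left (c ^ 8)
    exact h2.trans h3
  have hR1 : (fun h : ℝ => r (-(2*h))) =O[𝓝 (0:ℝ)] fun h => h ^ 8 := by
    simpa only [neg_mul] using hscale (-2)
  have hR2 : (fun h : ℝ => r (-h)) =O[𝓝 (0:ℝ)] fun h => h ^ 8 := by
    simpa only [neg_mul, one_mul] using hscale (-1)
  have hR3 : (fun h : ℝ => r h) =O[𝓝 (0:ℝ)] fun h => h ^ 8 := by
    simpa only [one_mul] using hscale 1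
  have hR4 : (fun h : ℝ => r (2*h)) =O[𝓝 (0:ℝ)] fun h => h ^ 8 := hscale 2
  have hU : ∀ u : ℝ → ℝ, Continuous u → u =O[𝓝 (0:ℝ)] (fun _ => (1:ℝ)) :=
    fun u hu => (hu.tendsto 0).isBigO_one ℝ
  have hE : ∀ h : ℝ, globalE f x h -
      2 * (iteratedDeriv 2 f x * iteratedDeriv 4 f x + (iteratedDeriv 3 f x)^2) * h^6 =
      (r (-(2*h)) - 2*r (-h)) * ((((f x) + (iteratedDeriv 1 f x) * (-2*h) + (iteratedDeriv 2 f x)/2 * (-2*h)^2 + (iteratedDeriv 3 f x)/6 * (-2*h)^3 + (iteratedDeriv 4 f x)/24 * (-2*h)^4 + (iteratedDeriv 5 f x)/120 * (-2*h)^5 + (iteratedDeriv 6 f x)/720 * (-2*h)^6 + (iteratedDeriv 7 f x)/5040 * (-2*h)^7) + r (-(2*h)) - 2*(((f x) + (iteratedDeriv 1 f x) * (-h) + (iteratedDeriv 2 f x)/2 * (-h)^2 + (iteratedDeriv 3 f x)/6 * (-h)^3 + (iteratedDeriv 4 f x)/24 * (-h)^4 + (iteratedDeriv 5 f x)/120 *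 (-h)^5 + (iteratedDeriv 6 f x)/720 * (-h)^6 + (iteratedDeriv 7 f x)/5040 * (-h)^7) + r (-h)) + (f x)) + (((f x) + (iteratedDeriv 1 f x) * (-2*h) + (iteratedDeriv 2 f x)/2 * (-2*h)^2 + (iteratedDeriv 3 f x)/6 * (-2*h)^3 + (iteratedDeriv 4 f x)/24 * (-2*h)^4 + (iteratedDeriv 5 f x)/120 * (-2*h)^5 + (iteratedDeriv 6 f x)/720 * (-2*h)^6 + (iteratedDeriv 7 f x)/5040 * (-2*h)^7) - 2*((f x) + (iteratedDeriv 1 f x) * (-h) + (iteratedDeriv 2 f x)/2 * (-h)^2 + (iteratedDeriv 3 f x)/6 * (-h)^3 + (iteratedDeriv 4 f x)/24 * (-h)^4 + (iteratedDeriv 5 f x)/120 * (-h)^5 + (iteratedDeriv 6 f x)/720 * (-h)^6 + (iteratedDeriv 7 f x)/5040 * (-h)^7) + (f x))) - 2*((r (-h) + r h) * (((((f x) + (iteratedDeriv 1 f x) * (-h) + (iteratedDeriv 2 f x)/2 * (-h)^2 + (iteratedDeriv 3 f x)/6 * (-h)^3 + (iteratedDeriv 4 f x)/24 * (-h)^4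 + (iteratedDeriv 5 f x)/120 * (-h)^5 + (iteratedDeriv 6 f x)/720 * (-h)^6 + (iteratedDeriv 7 f x)/5040 * (-h)^7) + r (-h)) - 2*(f x) + (((f x) + (iteratedDeriv 1 f x) * h + (iteratedDeriv 2 f x)/2 * h^2 + (iteratedDeriv 3 f x)/6 * h^3 + (iteratedDeriv 4 f x)/24 * h^4 + (iteratedDeriv 5 f x)/120 * h^5 + (iteratedDeriv 6 f x)/720 * h^6 + (iteratedDeriv 7 f x)/5040 * h^7) + r h)) + (((f x) + (iteratedDeriv 1 f x) * (-h) + (iteratedDeriv 2 f x)/2 * (-h)^2 + (iteratedDeriv 3 f x)/6 * (-h)^3 + (iteratedDeriv 4 f x)/24 * (-h)^4 + (iteratedDeriv 5 f x)/120 * (-h)^5 + (iteratedDeriv 6 f x)/720 * (-h)^6 + (iteratedDeriv 7 f x)/5040 * (-h)^7) - 2*(f x) + ((f x) + (iteratedDeriv 1 f x) * h + (iteratedDeriv 2 f x)/2 * h^2 + (iteratedDeriv 3 f x)/6 * h^3 + (iteratedDeriv 4 f x)/24 * h^4 + (iteratedDeriv 5 f x)/120 * h^5 + (iteratedDeriv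 6 f x)/720 * h^6 + (iteratedDeriv 7 f x)/5040 * h^7)))) + (-(2*r h) + r (2*h)) * (((f x) - 2*(((f x) + (iteratedDeriv 1 f x) * h + (iteratedDeriv 2 f x)/2 * h^2 + (iteratedDeriv 3 f x)/6 * h^3 + (iteratedDeriv 4 f x)/24 * h^4 + (iteratedDeriv 5 f x)/120 * h^5 + (iteratedDeriv 6 f x)/720 * h^6 + (iteratedDeriv 7 f x)/5040 * h^7) + r h) + (((f x) + (iteratedDeriv 1 f x) * (2*h) + (iteratedDeriv 2 f x)/2 * (2*h)^2 + (iteratedDeriv 3 f x)/6 * (2*h)^3 + (iteratedDeriv 4 f x)/24 * (2*h)^4 + (iteratedDeriv 5 f x)/120 * (2*h)^5 + (iteratedDeriv 6 f x)/720 * (2*h)^6 + (iteratedDeriv 7 f x)/5040 * (2*h)^7) + r (2*h))) + ((f x) - 2*((f x) + (iteratedDeriv 1 f x) * h + (iteratedDeriv 2 f x)/2 * h^2 + (iteratedDeriv 3 f x)/6 * h^3 + (iteratedDeriv 4 f x)/24 * h^4 + (iteratedDeriv 5 f x)/120 * h^5 + (iteratedDeriv 6 f x)/720 * h^6 + (iteratedDeriv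 7 f x)/5040 * h^7) + ((f x) + (iteratedDeriv 1 f x) * (2*h) + (iteratedDeriv 2 f x)/2 * (2*h)^2 + (iteratedDeriv 3 f x)/6 * (2*h)^3 + (iteratedDeriv 4 f x)/24 * (2*h)^4 + (iteratedDeriv 5 f x)/120 * (2*h)^5 + (iteratedDeriv 6 f x)/720 * (2*h)^6 + (iteratedDeriv 7 f x)/5040 * (2*h)^7))) + h^8 * ((((2:ℝ)/3)*(iteratedDeriv 4 f x)^2 + (iteratedDeriv 3 f x)*(iteratedDeriv 5 f x) + ((1:ℝ)/3)*(iteratedDeriv 2 f x)*(iteratedDeriv 6 f x)) + (((1:ℝ)/8)*(iteratedDeriv 5 f x)^2 + ((1:ℝ)/5)*(iteratedDeriv 4 f x)*(iteratedDeriv 6 f x) + ((1:ℝ)/10)*(iteratedDeriv 3 f x)*(iteratedDeriv 7 f x))*h^2 + (((2:ℝ)/135)*(iteratedDeriv 6 f x)^2 + ((1:ℝ)/40)*(iteratedDeriv 5 f x)*(iteratedDeriv 7 f x))*h^4 + (((1:ℝ)/800)*(iteratedDeriv 7 f x)^2)*h^6) := by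
    intro h
    have key := global_algebra (f x) (iteratedDeriv 1 f x) (iteratedDeriv 2 f x)
      (iteratedDeriv 3 f x) (iteratedDeriv 4 f x) (iteratedDeriv 5 f x) (iteratedDeriv 6 f x)
      (iteratedDeriv 7 f x) h (r (-(2*h))) (r (-h)) (r h) (r (2*h))
    have e1 : f (x - 2*h) = ((f x) + (iteratedDeriv 1 f x) * (-2*h) + (iteratedDeriv 2 f x)/2 * (-2*h)^2 + (iteratedDeriv 3 f x)/6 * (-2*h)^3 + (iteratedDeriv 4 f x)/24 * (-2*h)^4 + (iteratedDeriv 5 f x)/120 * (-2*h)^5 + (iteratedDeriv 6 f x)/720 * (-2*h)^6 + (iteratedDeriv 7 f x)/5040 * (-2*h)^7) + r (-(2*h)) := by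
      rw [hrdef]
      rw [show x - 2*h = x + -(2*h) by ring]
      ring
    have e2 : f (x - h) = ((f x) + (iteratedDeriv 1 f x) * (-h) + (iteratedDeriv 2 f x)/2 * (-h)^2 + (iteratedDeriv 3 f x)/6 * (-h)^3 + (iteratedDeriv 4 f x)/24 * (-h)^4 + (iteratedDeriv 5 f x)/120 * (-h)^5 + (iteratedDeriv 6 f x)/720 * (-h)^6 + (iteratedDeriv 7 f x)/5040 * (-h)^7) + r (-h) := by
      rw [hrdef]
      rw [show x - h = x + -h by ring]
      ring
    have e3 : f (x + h) = ((f x) + (iteratedDeriv 1 f x) * h + (iteratedDeriv 2 f x)/2 * h^2 + (iteratedDeriv 3 f x)/6 * h^3 + (iteratedDeriv 4 f x)/24 * h^4 + (iteratedDeriv 5 f x)/120 * h^5 + (iteratedDeriv 6 f x)/720 * h^6 + (iteratedDeriv 7 f x)/5040 * h^7) + r h := by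
      rw [hrdef]; ring
    have e4 : f (x + 2*h) = ((f x) + (iteratedDeriv 1 f x) * (2*h) + (iteratedDeriv 2 f x)/2 * (2*h)^2 + (iteratedDeriv 3 f x)/6 * (2*h)^3 + (iteratedDeriv 4 f x)/24 * (2*h)^4 + (iteratedDeriv 5 f x)/120 * (2*h)^5 + (iteratedDeriv 6 f x)/720 * (2*h)^6 + (iteratedDeriv 7 f x)/5040 * (2*h)^7) + r (2*h) := by
      rw [hrdef]; ring
    rw [globalE, e1, e2, e3, e4]
    exact key
  have hMain : (fun h : ℝ => globalE f x h -
      2 * (iteratedDeriv 2 f x * iteratedDeriv 4 f x + (iteratedDeriv 3 f x)^2) * h^6)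
      =O[𝓝 (0:ℝ)] fun h => h ^ 8 := by
    rw [funext hE]
    have hu1 : Continuous (fun h : ℝ => ((((f x) + (iteratedDeriv 1 f x) * (-2*h) + (iteratedDeriv 2 f x)/2 * (-2*h)^2 + (iteratedDeriv 3 f x)/6 * (-2*h)^3 + (iteratedDeriv 4 f x)/24 * (-2*h)^4 + (iteratedDeriv 5 f x)/120 * (-2*h)^5 + (iteratedDeriv 6 f x)/720 * (-2*h)^6 + (iteratedDeriv 7 f x)/5040 * (-2*h)^7) + r (-(2*h)) - 2*(((f x) + (iteratedDeriv 1 f x) * (-h) + (iteratedDeriv 2 f x)/2 * (-h)^2 + (iteratedDeriv 3 f x)/6 * (-h)^3 + (iteratedDeriv 4 f x)/24 * (-h)^4 + (iteratedDeriv 5 f x)/120 * (-h)^5 + (iteratedDeriv 6 f x)/720 * (-h)^6 + (iteratedDeriv 7 f x)/5040 * (-h)^7) + r (-h)) + (f x)) + (((f x) + (iteratedDeriv 1 f x) * (-2*h) + (iteratedDeriv 2 f x)/2 * (-2*h)^2 + (iteratedDeriv 3 f x)/6 * (-2*h)^3 + (iteratedDeriv 4 f x)/24 * (-2*h)^4 +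 (iteratedDeriv 5 f x)/120 * (-2*h)^5 + (iteratedDeriv 6 f x)/720 * (-2*h)^6 + (iteratedDeriv 7 f x)/5040 * (-2*h)^7) - 2*((f x) + (iteratedDeriv 1 f x) * (-h) + (iteratedDeriv 2 f x)/2 * (-h)^2 + (iteratedDeriv 3 f x)/6 * (-h)^3 + (iteratedDeriv 4 f x)/24 * (-h)^4 + (iteratedDeriv 5 f x)/120 * (-h)^5 + (iteratedDeriv 6 f x)/720 * (-h)^6 + (iteratedDeriv 7 f x)/5040 * (-h)^7) + (f x)))) := by fun_prop
    have hu2 : Continuous (fun h : ℝ => (((((f x) + (iteratedDeriv 1 f x) * (-h) + (iteratedDeriv 2 f x)/2 * (-h)^2 + (iteratedDeriv 3 f x)/6 * (-h)^3 + (iteratedDeriv 4 f x)/24 * (-h)^4 + (iteratedDeriv 5 f x)/120 * (-h)^5 + (iteratedDeriv 6 f x)/720 * (-h)^6 + (iteratedDeriv 7 f x)/5040 * (-h)^7) + r (-h)) - 2*(f x) + (((f x) + (iteratedDeriv 1 f x) * h + (iteratedDeriv 2 f x)/2 * h^2 + (iteratedDeriv 3 f x)/6 * h^3 + (iteratedDeriv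 4 f x)/24 * h^4 + (iteratedDeriv 5 f x)/120 * h^5 + (iteratedDeriv 6 f x)/720 * h^6 + (iteratedDeriv 7 f x)/5040 * h^7) + r h)) + (((f x) + (iteratedDeriv 1 f x) * (-h) + (iteratedDeriv 2 f x)/2 * (-h)^2 + (iteratedDeriv 3 f x)/6 * (-h)^3 + (iteratedDeriv 4 f x)/24 * (-h)^4 + (iteratedDeriv 5 f x)/120 * (-h)^5 + (iteratedDeriv 6 f x)/720 * (-h)^6 + (iteratedDeriv 7 f x)/5040 * (-h)^7) - 2*(f x) + ((f x) + (iteratedDeriv 1 f x) * h + (iteratedDeriv 2 f x)/2 * h^2 + (iteratedDeriv 3 f x)/6 * h^3 + (iteratedDeriv 4 f x)/24 * h^4 + (iteratedDeriv 5 f x)/120 * h^5 + (iteratedDeriv 6 f x)/720 * h^6 + (iteratedDeriv 7 f x)/5040 * h^7)))) := by fun_prop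
    have hu3 : Continuous (fun h : ℝ => (((f x) - 2*(((f x) + (iteratedDeriv 1 f x) * h + (iteratedDeriv 2 f x)/2 * h^2 + (iteratedDeriv 3 f x)/6 * h^3 + (iteratedDeriv 4 f x)/24 * h^4 + (iteratedDeriv 5 f x)/120 * h^5 + (iteratedDeriv 6 f x)/720 * h^6 + (iteratedDeriv 7 f x)/5040 * h^7) + r h) + (((f x) + (iteratedDeriv 1 f x) * (2*h) + (iteratedDeriv 2 f x)/2 * (2*h)^2 + (iteratedDeriv 3 f x)/6 * (2*h)^3 + (iteratedDeriv 4 f x)/24 * (2*h)^4 + (iteratedDeriv 5 f x)/120 * (2*h)^5 + (iteratedDeriv 6 f x)/720 * (2*h)^6 + (iteratedDeriv 7 f x)/5040 * (2*h)^7) + r (2*h))) + ((f x) - 2*((f x) + (iteratedDeriv 1 f x) * h + (iteratedDeriv 2 f x)/2 * h^2 + (iteratedDeriv 3 f x)/6 * h^3 + (iteratedDeriv 4 f x)/24 * h^4 + (iteratedDeriv 5 f x)/120 * h^5 + (iteratedDeriv 6 f x)/720 * h^6 + (iteratedDeriv 7 f x)/5040 * h^7) + ((f x) + (iteratedDeriv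 1 f x) * (2*h) + (iteratedDeriv 2 f x)/2 * (2*h)^2 + (iteratedDeriv 3 f x)/6 * (2*h)^3 + (iteratedDeriv 4 f x)/24 * (2*h)^4 + (iteratedDeriv 5 f x)/120 * (2*h)^5 + (iteratedDeriv 6 f x)/720 * (2*h)^6 + (iteratedDeriv 7 f x)/5040 * (2*h)^7)))) := by fun_prop
    have huQ : Continuous (fun h : ℝ => ((((2:ℝ)/3)*(iteratedDeriv 4 f x)^2 + (iteratedDeriv 3 f x)*(iteratedDeriv 5 f x) + ((1:ℝ)/3)*(iteratedDeriv 2 f x)*(iteratedDeriv 6 f x)) + (((1:ℝ)/8)*(iteratedDeriv 5 f x)^2 + ((1:ℝ)/5)*(iteratedDeriv 4 f x)*(iteratedDeriv 6 f x) + ((1:ℝ)/10)*(iteratedDeriv 3 f x)*(iteratedDeriv 7 f x))*h^2 + (((2:ℝ)/135)*(iteratedDeriv 6 f x)^2 + ((1:ℝ)/40)*(iteratedDeriv 5 f x)*(iteratedDeriv 7 f x))*h^4 + (((1:ℝ)/800)*(iteratedDeriv 7 f x)^2)*h^6)) := by fun_prop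
    have t1 : (fun h : ℝ => (r (-(2*h)) - 2*r (-h)) * ((((f x) + (iteratedDeriv 1 f x) * (-2*h) + (iteratedDeriv 2 f x)/2 * (-2*h)^2 + (iteratedDeriv 3 f x)/6 * (-2*h)^3 + (iteratedDeriv 4 f x)/24 * (-2*h)^4 + (iteratedDeriv 5 f x)/120 * (-2*h)^5 + (iteratedDeriv 6 f x)/720 * (-2*h)^6 + (iteratedDeriv 7 f x)/5040 * (-2*h)^7) + r (-(2*h)) - 2*(((f x) + (iteratedDeriv 1 f x) * (-h) + (iteratedDeriv 2 f x)/2 * (-h)^2 + (iteratedDeriv 3 f x)/6 * (-h)^3 + (iteratedDeriv 4 f x)/24 * (-h)^4 + (iteratedDeriv 5 f x)/120 * (-h)^5 + (iteratedDeriv 6 f x)/720 * (-h)^6 + (iteratedDeriv 7 f x)/5040 * (-h)^7) + r (-h)) + (f x)) + (((f x) + (iteratedDeriv 1 f x) * (-2*h) + (iteratedDeriv 2 f x)/2 * (-2*h)^2 + (iteratedDeriv 3 f x)/6 * (-2*h)^3 + (iteratedDeriv 4 f x)/24 * (-2*h)^4 + (iteratedDeriv 5 f x)/120 * (-2*h)^5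 + (iteratedDeriv 6 f x)/720 * (-2*h)^6 + (iteratedDeriv 7 f x)/5040 * (-2*h)^7) - 2*((f x) + (iteratedDeriv 1 f x) * (-h) + (iteratedDeriv 2 f x)/2 * (-h)^2 + (iteratedDeriv 3 f x)/6 * (-h)^3 + (iteratedDeriv 4 f x)/24 * (-h)^4 + (iteratedDeriv 5 f x)/120 * (-h)^5 + (iteratedDeriv 6 f x)/720 * (-h)^6 + (iteratedDeriv 7 f x)/5040 * (-h)^7) + (f x)))) =O[𝓝 (0:ℝ)] fun h => h ^ 8 := by
      have := (hR1.sub (hR2.const_mul_left 2)).mul (hU _ hu1)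
      simpa only [mul_one] using this
    have t2 : (fun h : ℝ => 2*((r (-h) + r h) * (((((f x) + (iteratedDeriv 1 f x) * (-h) + (iteratedDeriv 2 f x)/2 * (-h)^2 + (iteratedDeriv 3 f x)/6 * (-h)^3 + (iteratedDeriv 4 f x)/24 * (-h)^4 + (iteratedDeriv 5 f x)/120 * (-h)^5 + (iteratedDeriv 6 f x)/720 * (-h)^6 + (iteratedDeriv 7 f x)/5040 * (-h)^7) + r (-h)) - 2*(f x) + (((f x) + (iteratedDeriv 1 f x) * h + (iteratedDeriv 2 f x)/2 * h^2 + (iteratedDeriv 3 f x)/6 * h^3 + (iteratedDeriv 4 f x)/24 * h^4 + (iteratedDeriv 5 f x)/120 * h^5 + (iteratedDeriv 6 f x)/720 * h^6 + (iteratedDeriv 7 f x)/5040 * h^7) + r h)) + (((f x) + (iteratedDeriv 1 f x) * (-h) + (iteratedDeriv 2 f x)/2 * (-h)^2 + (iteratedDeriv 3 f x)/6 * (-h)^3 + (iteratedDeriv 4 f x)/24 * (-h)^4 + (iteratedDeriv 5 f x)/120 * (-h)^5 + (iteratedDeriv 6 f x)/720 * (-h)^6 + (iteratedDeriv 7 f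 x)/5040 * (-h)^7) - 2*(f x) + ((f x) + (iteratedDeriv 1 f x) * h + (iteratedDeriv 2 f x)/2 * h^2 + (iteratedDeriv 3 f x)/6 * h^3 + (iteratedDeriv 4 f x)/24 * h^4 + (iteratedDeriv 5 f x)/120 * h^5 + (iteratedDeriv 6 f x)/720 * h^6 + (iteratedDeriv 7 f x)/5040 * h^7))))) =O[𝓝 (0:ℝ)] fun h => h ^ 8 := by
      have := (((hR2.add hR3).mul (hU _ hu2)).const_mul_left 2)
      simpa only [mul_one] using this
    have t3 : (fun h : ℝ => (-(2*r h) + r (2*h)) * (((f x) - 2*(((f x) + (iteratedDeriv 1 f x) * h + (iteratedDeriv 2 f x)/2 * h^2 + (iteratedDeriv 3 f x)/6 * h^3 + (iteratedDeriv 4 f x)/24 * h^4 + (iteratedDeriv 5 f x)/120 * h^5 + (iteratedDeriv 6 f x)/720 * h^6 + (iteratedDeriv 7 f x)/5040 * h^7) + r h) + (((f x) + (iteratedDeriv 1 f x) * (2*h) + (iteratedDeriv 2 f x)/2 * (2*h)^2 + (iteratedDeriv 3 f x)/6 * (2*h)^3 + (iteratedDeriv 4 f x)/24 * (2*h)^4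 + (iteratedDeriv 5 f x)/120 * (2*h)^5 + (iteratedDeriv 6 f x)/720 * (2*h)^6 + (iteratedDeriv 7 f x)/5040 * (2*h)^7) + r (2*h))) + ((f x) - 2*((f x) + (iteratedDeriv 1 f x) * h + (iteratedDeriv 2 f x)/2 * h^2 + (iteratedDeriv 3 f x)/6 * h^3 + (iteratedDeriv 4 f x)/24 * h^4 + (iteratedDeriv 5 f x)/120 * h^5 + (iteratedDeriv 6 f x)/720 * h^6 + (iteratedDeriv 7 f x)/5040 * h^7) + ((f x) + (iteratedDeriv 1 f x) * (2*h) + (iteratedDeriv 2 f x)/2 * (2*h)^2 + (iteratedDeriv 3 f x)/6 * (2*h)^3 + (iteratedDeriv 4 f x)/24 * (2*h)^4 + (iteratedDeriv 5 f x)/120 * (2*h)^5 + (iteratedDeriv 6 f x)/720 * (2*h)^6 + (iteratedDeriv 7 f x)/5040 * (2*h)^7)))) =O[𝓝 (0:ℝ)] fun h => h ^ 8 := by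
      have := ((hR3.const_mul_left 2).neg_left.add hR4).mul (hU _ hu3)
      simpa only [mul_one] using this
    have t4 : (fun h : ℝ => h^8 * ((((2:ℝ)/3)*(iteratedDeriv 4 f x)^2 + (iteratedDeriv 3 f x)*(iteratedDeriv 5 f x) + ((1:ℝ)/3)*(iteratedDeriv 2 f x)*(iteratedDeriv 6 f x)) + (((1:ℝ)/8)*(iteratedDeriv 5 f x)^2 + ((1:ℝ)/5)*(iteratedDeriv 4 f x)*(iteratedDeriv 6 f x) + ((1:ℝ)/10)*(iteratedDeriv 3 f x)*(iteratedDeriv 7 f x))*h^2 + (((2:ℝ)/135)*(iteratedDeriv 6 f x)^2 + ((1:ℝ)/40)*(iteratedDeriv 5 f x)*(iteratedDeriv 7 f x))*h^4 + (((1:ℝ)/800)*(iteratedDeriv 7 f x)^2)*h^6)) =O[𝓝 (0:ℝ)] fun h => h ^ 8 := by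
      have := (isBigO_refl (fun h : ℝ => h ^ 8) (𝓝 (0:ℝ))).mul (hU _ huQ)
      simpa only [mul_one] using this
    exact ((t1.sub t2).add t3).add t4
  have hM1 := hMain.mono (nhdsWithin_le_nhds (s := Set.Ioi (0:ℝ)) (a := (0:ℝ)))
  refine ⟨hM1, ?_⟩
  have habs : ∀ h : ℝ, ‖|globalE f x h| -
      2 * |iteratedDeriv 2 f x * iteratedDeriv 4 f x + (iteratedDeriv 3 f x)^2| * h^6‖ ≤
      ‖globalE f x h -
      2 * (iteratedDeriv 2 f x * iteratedDeriv 4 f x + (iteratedDeriv 3 f x)^2) * h^6‖ := by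
    intro h
    have h6 : (0:ℝ) ≤ h^6 := by positivity
    have habs2 : 2 * |iteratedDeriv 2 f x * iteratedDeriv 4 f x + (iteratedDeriv 3 f x)^2| * h^6
        = |2 * (iteratedDeriv 2 f x * iteratedDeriv 4 f x + (iteratedDeriv 3 f x)^2) * h^6| := by
      rw [abs_mul, abs_mul, abs_of_nonneg h6, abs_two]
    rw [Real.norm_eq_abs, Real.norm_eq_abs, habs2]
    exact abs_abs_sub_abs_le_abs_sub _ _
  exact (isBigO_of_le _ habs).trans hM1
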